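/- In a uniquely geodesic metric space, if H is a closed half-plane (the closure of a connected component of the complement of a bi-infinite geodesic line whose boundary is that geodesic), then H is convex: for any x, y ∈ H, the geodesic segment [x,y] is contained in H. -/

import Mathlib

open Set

/-- `γ` is a geodesic segment from `x` to `y`, parametrized by arclength on
`[0, dist x y]`. -/
def IsGeodesicSegment {X : Type*} [MetricSpace X] (γ : ℝ → X) (x y : X) : Prop :=
  γ 0 = x ∧ γ (dist x y) = y ∧
    ∀ s ∈ Icc (0 : ℝ) (dist x y), ∀ t ∈ Icc (0 : ℝ) (dist x y),
      dist (γ s) (γ t) = |s - t|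

/-- `L` is a bi-infinite geodesic line, parametrized by arclength on `ℝ`. -/
def IsGeodesicLine {X : Type*} [MetricSpace X] (L : ℝ → X) : Prop :=
  ∀ s t : ℝ, dist (L s) (L t) = |s - t|

/-!
A geodesic segment `γ` that meets the line `L` at times `a ≤ t ≤ b` agrees on `[a, b]` with
the arc of `L` joining `γ a` and `γ b`, by uniqueness of geodesics, so `γ t ∈ L`. Otherwise
`γ` avoids `L` on `[0, t]` or on `[t, d]`; that interval is connected and contains an endpoint
of `γ`, which lies in `H`, so its image stays in the complementary component defining `H`.
-/

lemma ContinuousOn.mem_connectedComponentIn_of_mapsTo {α X : Type*} [TopologicalSpace α]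
    [TopologicalSpace X] {f : α → X} {J : Set α} {S : Set X} {p : X}
    (hf : ContinuousOn f J) (hJ : IsPreconnected J) (hJS : MapsTo f J Sᶜ)
    {r t : α} (hr : r ∈ J) (ht : t ∈ J) (hfr : f r ∈ connectedComponentIn Sᶜ p ∪ S) :
    f t ∈ connectedComponentIn Sᶜ p := by
  have hfr' : f r ∈ connectedComponentIn Sᶜ p := hfr.resolve_right (hJS hr)
  rw [connectedComponentIn_eq hfr']
  exact (hJ.image f hf).subset_connectedComponentIn (mem_image_of_mem f hr) hJS.image_subset
    (mem_image_of_mem f ht)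

def HasUniqueGeodesicSegments (X : Type*) [MetricSpace X] : Prop :=
  ∀ (x y : X) (γ₁ γ₂ : ℝ → X), IsGeodesicSegment γ₁ x y →
    IsGeodesicSegment γ₂ x y → ∀ t ∈ Icc (0 : ℝ) (dist x y), γ₁ t = γ₂ t

section Geodesic

variable {X : Type*} [MetricSpace X]

namespace IsGeodesicSegment

variable {γ : ℝ → X} {x y : X}

lemma continuousOn (hγ : IsGeodesicSegment γ x y) : ContinuousOn γ (Icc 0 (dist x y)) :=
  LipschitzOnWith.continuousOn (K := 1) fun s hs u hu => by
    rw [edist_dist, edist_dist, hγ.2.2 s hs u hu, Real.dist_eq, ENNReal.coe_one, one_mul]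

lemma dist_eq_sub (hγ : IsGeodesicSegment γ x y) {a b : ℝ} (ha : 0 ≤ a) (hab : a ≤ b)
    (hb : b ≤ dist x y) : dist (γ a) (γ b) = b - a := by
  rw [hγ.2.2 a ⟨ha, hab.trans hb⟩ b ⟨ha.trans hab, hb⟩, abs_sub_comm,
    abs_of_nonneg (sub_nonneg.2 hab)]

lemma comp_add (hγ : IsGeodesicSegment γ x y) {a b : ℝ} (ha : 0 ≤ a) (hab : a ≤ b)
    (hb : b ≤ dist x y) : IsGeodesicSegment (fun r => γ (a + r)) (γ a) (γ b) := by
  have hd := hγ.dist_eq_sub ha hab hb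
  refine ⟨by simp, by simp only [hd, add_sub_cancel], fun r hr r' hr' => ?_⟩
  rw [hd] at hr hr'
  rw [hγ.2.2 _ ⟨by linarith [hr.1], by linarith [hr.2]⟩ _
    ⟨by linarith [hr'.1], by linarith [hr'.2]⟩, add_sub_add_left_eq_sub]

end IsGeodesicSegment

namespace IsGeodesicLine

variable {L : ℝ → X}

lemma isGeodesicSegment (hL : IsGeodesicLine L) (s u : ℝ) :
    IsGeodesicSegment (fun r => L (s + (u - s) / |u - s| * r)) (L s) (L u) := by
  rcases eq_or_ne s u with rfl | hsu
  · refine ⟨by simp, by simp, fun r hr r' hr' => ?_⟩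
    simp only [dist_self, Icc_self, mem_singleton_iff] at hr hr'
    rw [hr, hr']
    simp
  have hpos : 0 < |u - s| := abs_pos.2 (sub_ne_zero.2 hsu.symm)
  have hd : dist (L s) (L u) = |u - s| := by rw [hL, abs_sub_comm]
  refine ⟨by simp, ?_, fun r _ r' _ => ?_⟩
  · simp only [hd, div_mul_cancel₀ _ hpos.ne', add_sub_cancel]
  · rw [hL, add_sub_add_left_eq_sub, ← mul_sub, abs_mul, abs_div, abs_abs, div_self hpos.ne',
      one_mul]

lemma mem_range_of_isGeodesicSegment (huniq : HasUniqueGeodesicSegments X)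
    (hL : IsGeodesicLine L) {γ : ℝ → X} {s u : ℝ} (hγ : IsGeodesicSegment γ (L s) (L u))
    {t : ℝ} (ht : t ∈ Icc 0 (dist (L s) (L u))) : γ t ∈ range L :=
  ⟨_, (huniq _ _ _ _ hγ (hL.isGeodesicSegment s u) t ht).symm⟩

lemma mem_range_of_le_of_le (huniq : HasUniqueGeodesicSegments X) (hL : IsGeodesicLine L)
    {γ : ℝ → X} {x y : X} (hγ : IsGeodesicSegment γ x y) {a b t : ℝ} (ha : 0 ≤ a)
    (hat : a ≤ t) (htb : t ≤ b) (hb : b ≤ dist x y) (hγa : γ a ∈ range L)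
    (hγb : γ b ∈ range L) : γ t ∈ range L := by
  obtain ⟨s, hs⟩ := hγa
  obtain ⟨u, hu⟩ := hγb
  have hd := hγ.dist_eq_sub ha (hat.trans htb) hb
  have hsub := hγ.comp_add ha (hat.trans htb) hb
  rw [← hs, ← hu] at hsub hd
  simpa using hL.mem_range_of_isGeodesicSegment huniq hsub
    ⟨sub_nonneg.2 hat, by rw [hd]; linarith⟩

end IsGeodesicLine

end Geodesic

theorem closed_halfplane_convex_general {X : Type*} [MetricSpace X]
    (huniq : ∀ (x y : X) (γ₁ γ₂ : ℝ → X), IsGeodesicSegment γ₁ x y →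
      IsGeodesicSegment γ₂ x y → ∀ t ∈ Icc (0 : ℝ) (dist x y), γ₁ t = γ₂ t)
    (L : ℝ → X) (hL : IsGeodesicLine L)
    (p : X)
    (H : Set X) (hH : H = connectedComponentIn (range L)ᶜ p ∪ range L) :
    ∀ x ∈ H, ∀ y ∈ H, ∀ γ : ℝ → X, IsGeodesicSegment γ x y →
      ∀ t ∈ Icc (0 : ℝ) (dist x y), γ t ∈ H := by
  subst hH
  intro x hx y hy γ hγ t ⟨ht0, htd⟩
  by_cases hA : ∃ a ∈ Icc 0 t, γ a ∈ range L
  · by_cases hB : ∃ b ∈ Icc t (dist x y), γ b ∈ range L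
    · obtain ⟨a, ⟨ha0, hat⟩, hγa⟩ := hA
      obtain ⟨b, ⟨htb, hbd⟩, hγb⟩ := hB
      exact Or.inr (hL.mem_range_of_le_of_le huniq hγ ha0 hat htb hbd hγa hγb)
    · push Not at hB
      exact Or.inl <| (hγ.continuousOn.mono (Icc_subset_Icc ht0 le_rfl))
        |>.mem_connectedComponentIn_of_mapsTo isPreconnected_Icc hB
          ⟨htd, le_rfl⟩ ⟨le_rfl, htd⟩ (by rwa [hγ.2.1])
  · push Not at hA
    exact Or.inl <| (hγ.continuousOn.mono (Icc_subset_Icc le_rfl htd))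
      |>.mem_connectedComponentIn_of_mapsTo isPreconnected_Icc hA
        ⟨le_rfl, ht0⟩ ⟨ht0, le_rfl⟩ (by rwa [hγ.1])

theorem closed_halfplane_convex {X : Type*} [MetricSpace X]
    (hexists : ∀ x y : X, ∃ γ : ℝ → X, IsGeodesicSegment γ x y)
    (huniq : ∀ (x y : X) (γ₁ γ₂ : ℝ → X), IsGeodesicSegment γ₁ x y →
      IsGeodesicSegment γ₂ x y → ∀ t ∈ Icc (0 : ℝ) (dist x y), γ₁ t = γ₂ t)
    (L : ℝ → X) (hL : IsGeodesicLine L)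
    (p : X) (hp : p ∉ range L)
    (H : Set X) (hH : H = connectedComponentIn (range L)ᶜ p ∪ range L) :
    ∀ x ∈ H, ∀ y ∈ H, ∀ γ : ℝ → X, IsGeodesicSegment γ x y →
      ∀ t ∈ Icc (0 : ℝ) (dist x y), γ t ∈ H :=
  closed_halfplane_convex_general huniq L hL p H hH
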